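/- For a forest T_v rooted at a hypernode v, let 𝒳(v) be the (finite) collection of all hypernode sequences (x_1, …, x_n) that can occur after x_0 = v in the SEI selection process (i.e., x_{i+1} ∈ H(x_i) for each i, ending at the leaves). Assuming all relevant subtree costs are positive, the squared coefficient of variation of the SEI estimate satisfies CV²(|v|·C_SEI(T_v)) ≤ max over (x_1, …, x_n) ∈ 𝒳(v) of α(v, x_1, …, x_n), minus 1. (Paper's Theorem 7.) -/

import Mathlib

open Finset

/-- A finite rooted tree on a finite node type `V`.  The root is its own parent,
every non-root node has a parent whose depth is one smaller, and the root is the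
unique node of depth `0`. -/
structure FinRootedTree (V : Type) [Fintype V] [DecidableEq V] where
  root : V
  parent : V → V
  depth : V → ℕ
  depth_root : depth root = 0
  parent_root : parent root = root
  depth_parent : ∀ v, v ≠ root → depth (parent v) + 1 = depth v
  eq_root_of_depth_zero : ∀ v, depth v = 0 → v = root

namespace FinRootedTree

variable {V : Type} [Fintype V] [DecidableEq V]

/-- The set of children of a node. -/
def children (T : FinRootedTree V) (x : V) : Finset V :=
  Finset.univ.filter fun w => w ≠ T.root ∧ T.parent w = x

/-- `S(v)`: the set of all children of nodes of a hypernode `v`. -/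
def succs (T : FinRootedTree V) (v : Finset V) : Finset V :=
  v.biUnion T.children

/-- The set of nodes of the subtree rooted at `x` (the descendants of `x`,
including `x` itself). -/
def desc (T : FinRootedTree V) (x : V) : Finset V :=
  Finset.univ.filter fun w =>
    x ∈ (Finset.range (T.depth w + 1)).image fun k => T.parent^[k] w

/-- `Cost(T_x)`: the total cost of the subtree rooted at `x`. -/
noncomputable def subtreeCost (T : FinRootedTree V) (c : V → ℝ) (x : V) : ℝ :=
  ∑ w ∈ T.desc x, c w

/-- `Cost(T_v)`: the total cost of the forest rooted at the hypernode `v`. -/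
noncomputable def forestCost (T : FinRootedTree V) (c : V → ℝ) (v : Finset V) : ℝ :=
  ∑ x ∈ v, T.subtreeCost c x

/-- `H(v)`: the hyperchildren of `v` for budget `B`, i.e. the subsets of `S(v)`
of size `min B |S(v)|`. -/
def hyper (T : FinRootedTree V) (B : ℕ) (v : Finset V) : Finset (Finset V) :=
  (T.succs v).powersetCard (min B (T.succs v).card)

/-- A hypernode: a nonempty set of distinct nodes, all at the same depth. -/
def IsHypernode (T : FinRootedTree V) (v : Finset V) : Prop :=
  v.Nonempty ∧ ∀ a ∈ v, ∀ b ∈ v, T.depth a = T.depth b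

/-- Expectation functional of the SEI estimator `C_SEI(T_v)` (with importance
function `r`): `seiE T c B r fuel v g` is `E[g(C_SEI(T_v))]`, defined by the
recursion of Algorithm 2, where the hypernode `w` is drawn from `H(v)` with
probability `r(w) / (r(S(v)) * C(|S(v)|-1, |w|-1))`, with enough fuel to reach
the leaves. -/
noncomputable def seiE (T : FinRootedTree V) (c : V → ℝ) (B : ℕ)
    (r : V → ℝ) : ℕ → Finset V → (ℝ → ℝ) → ℝ
  | 0, v, g => g ((∑ x ∈ v, c x) / (v.card : ℝ))
  | fuel + 1, v, g =>
      if T.succs v = ∅ then g ((∑ x ∈ v, c x) / (v.card : ℝ))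
      else
        ∑ w ∈ T.hyper B v,
          ((∑ a ∈ w, r a) /
              ((∑ a ∈ T.succs v, r a) *
                ((((T.succs v).card - 1).choose (w.card - 1) : ℕ) : ℝ))) *
            seiE T c B r fuel w fun y =>
              g ((∑ x ∈ v, c x) / (v.card : ℝ) +
                ((w.card : ℝ) / (v.card : ℝ)) *
                  ((∑ a ∈ T.succs v, r a) / (∑ a ∈ w, r a)) * y)

/-- `Var(|v| * C_SEI(T_v))`. -/
noncomputable def seiVar (T : FinRootedTree V) (c : V → ℝ) (B : ℕ) (r : V → ℝ)
    (fuel : ℕ) (v : Finset V) : ℝ :=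
  seiE T c B r fuel v (fun y => ((v.card : ℝ) * y) ^ 2) -
    (seiE T c B r fuel v fun y => (v.card : ℝ) * y) ^ 2

/-- `CV²(|v| * C_SEI(T_v)) = Var(|v| * C_SEI(T_v)) / E[|v| * C_SEI(T_v)]²`. -/
noncomputable def seiCV2 (T : FinRootedTree V) (c : V → ℝ) (B : ℕ) (r : V → ℝ)
    (fuel : ℕ) (v : Finset V) : ℝ :=
  seiVar T c B r fuel v /
    (seiE T c B r fuel v fun y => (v.card : ℝ) * y) ^ 2

/-- The set of all complete hypernode sequences `(x_1, …)` that can occur after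
`x_0 = v` in the SEI selection process (each `x_{i+1} ∈ H(x_i)`, stopping at
the terminal position `S(x_k) = ∅`), given enough fuel. -/
def seqs (T : FinRootedTree V) (B : ℕ) : ℕ → Finset V → Finset (List (Finset V))
  | 0, _ => {[]}
  | fuel + 1, v =>
      if T.succs v = ∅ then {[]}
      else (T.hyper B v).biUnion fun w => (seqs T B fuel w).image fun l => w :: l

/-- `α(x_0, x_1, …, x_n) = ∏_{i=1}^n (r(S(x_{i-1}))/r(x_i)) * (Cost(T_{x_i})/Cost(T_{S(x_{i-1})}))`,
for the sequence starting at `v` and continuing along the list `l`. -/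
noncomputable def alphaSeq (T : FinRootedTree V) (c r : V → ℝ) :
    Finset V → List (Finset V) → ℝ
  | _, [] => 1
  | v, w :: l =>
      ((∑ a ∈ T.succs v, r a) / (∑ a ∈ w, r a)) *
        (T.forestCost c w / T.forestCost c (T.succs v)) * alphaSeq T c r w l

/-!
Each SEI step is an importance-sampling step. Every child of `v` lies in exactly
`C = C(|S(v)| - 1, |w| - 1)` of the hyperchildren `w ∈ H(v)`, and `P(w) · r(S(v)) / r(w) = 1 / C`,
so the child term is an unbiased estimate of `Cost(T_{S(v)})`; by induction
`E[|v| C_SEI(T_v)] = Cost(T_v)`. Let `M(v)` be the maximum of `α` over the sequences following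
`v`. The same cancellation, together with
`α(v, w, …) = (r(S(v)) / r(w)) (Cost(T_w) / Cost(T_{S(v)})) α(w, …) ≤ M(v)`, gives by induction
`E[(|v| C_SEI(T_v))²] ≤ M(v) Cost(T_v)²`, the cross terms being absorbed because `M(v) ≥ 1`.
Hence `CV² ≤ M(v) - 1`.
-/

theorem _root_.Finset.sum_sum_powersetCard {α M : Type*} [DecidableEq α] [AddCommMonoid M]
    (s : Finset α) {k : ℕ} (hk : 1 ≤ k) (f : α → M) :
    ∑ w ∈ s.powersetCard k, ∑ a ∈ w, f a = (s.card - 1).choose (k - 1) • ∑ a ∈ s, f a := by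
  rw [Finset.sum_comm' (t' := s) (s' := fun a => (s.powersetCard k).filter ({a} ⊆ ·))
    (by grind), smul_sum]
  refine sum_congr rfl fun a ha => ?_
  rw [sum_const, card_filter_powersetCard_subset _ _ _ (singleton_subset_iff.2 ha)
    (by simpa using hk), card_singleton]

variable (T : FinRootedTree V)

lemma mem_children {x y : V} : y ∈ T.children x ↔ y ≠ T.root ∧ T.parent y = x := by
  simp [children]

lemma depth_of_mem_children {x y : V} (h : y ∈ T.children x) :
    T.depth y = T.depth x + 1 := by
  rw [mem_children] at h
  rw [← T.depth_parent y h.1, h.2]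

lemma depth_iterate_parent {k : ℕ} {w : V} (h : k ≤ T.depth w) :
    T.depth (T.parent^[k] w) = T.depth w - k := by
  induction k with
  | zero => rfl
  | succ k ih =>
    have hk := ih (Nat.le_of_succ_le h)
    have hne : T.parent^[k] w ≠ T.root := by
      rintro he
      rw [he, T.depth_root] at hk
      omega
    rw [Function.iterate_succ_apply']
    have := T.depth_parent _ hne
    omega

lemma depth_lt_card (x : V) : T.depth x < Fintype.card V := by
  have hinj : Function.Injective fun k : Fin (T.depth x + 1) => T.parent^[k] x := by
    intro a b hab
    have ha := T.depth_iterate_parent (Nat.lt_succ_iff.1 a.2)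
    have hb := T.depth_iterate_parent (Nat.lt_succ_iff.1 b.2)
    rw [show T.parent^[a] x = T.parent^[b] x from hab, hb] at ha
    omega
  simpa using Fintype.card_le_of_injective _ hinj

lemma mem_desc {x w : V} : w ∈ T.desc x ↔ ∃ k ≤ T.depth w, T.parent^[k] w = x := by
  simp only [desc, mem_filter, mem_univ, true_and, mem_image, mem_range, Nat.lt_succ_iff]

lemma iterate_parent_of_mem_desc {x w : V} (h : w ∈ T.desc x) :
    T.depth x ≤ T.depth w ∧ T.parent^[T.depth w - T.depth x] w = x := by
  obtain ⟨k, hk, rfl⟩ := T.mem_desc.1 h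
  rw [T.depth_iterate_parent hk, Nat.sub_sub_self hk]
  exact ⟨Nat.sub_le _ _, rfl⟩

lemma desc_eq_insert_biUnion (x : V) :
    T.desc x = insert x ((T.children x).biUnion T.desc) := by
  ext w
  simp only [mem_insert, mem_biUnion, mem_desc, mem_children]
  constructor
  · rintro ⟨_ | j, hk, rfl⟩
    · exact Or.inl rfl
    · have hd := T.depth_iterate_parent (Nat.le_of_succ_le hk)
      refine Or.inr ⟨T.parent^[j] w, ⟨?_, (Function.iterate_succ_apply' ..).symm⟩,
        j, Nat.le_of_succ_le hk, rfl⟩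
      rintro hroot
      rw [hroot, T.depth_root] at hd
      omega
  · rintro (rfl | ⟨y, ⟨hy, rfl⟩, j, hj, rfl⟩)
    · exact ⟨0, Nat.zero_le _, rfl⟩
    · have hd := T.depth_iterate_parent hj
      have := T.depth_parent _ hy
      exact ⟨j + 1, by omega, Function.iterate_succ_apply' ..⟩

lemma disjoint_desc {y₁ y₂ : V} (hd : T.depth y₁ = T.depth y₂) (hne : y₁ ≠ y₂) :
    Disjoint (T.desc y₁) (T.desc y₂) := by
  refine Finset.disjoint_left.2 fun w h₁ h₂ => hne ?_
  rw [← (T.iterate_parent_of_mem_desc h₁).2, ← (T.iterate_parent_of_mem_desc h₂).2, hd]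

lemma notMem_biUnion_children_desc (x : V) : x ∉ (T.children x).biUnion T.desc := by
  simp only [mem_biUnion, not_exists, not_and]
  intro y hy hx
  have := (T.iterate_parent_of_mem_desc hx).1
  have := T.depth_of_mem_children hy
  omega

lemma disjoint_children {x₁ x₂ : V} (hne : x₁ ≠ x₂) :
    Disjoint (T.children x₁) (T.children x₂) := by
  refine Finset.disjoint_left.2 fun y h₁ h₂ => hne ?_
  rw [← (T.mem_children.1 h₁).2, (T.mem_children.1 h₂).2]

variable (c : V → ℝ)

lemma subtreeCost_eq_add_sum_children (x : V) :
    T.subtreeCost c x = c x + ∑ y ∈ T.children x, T.subtreeCost c y := by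
  rw [subtreeCost, T.desc_eq_insert_biUnion, sum_insert (T.notMem_biUnion_children_desc x),
    sum_biUnion fun y₁ h₁ y₂ h₂ hne => T.disjoint_desc
      (by rw [T.depth_of_mem_children h₁, T.depth_of_mem_children h₂]) hne]
  rfl

lemma forestCost_eq_add_forestCost_succs (v : Finset V) :
    T.forestCost c v = ∑ x ∈ v, c x + T.forestCost c (T.succs v) := by
  rw [forestCost, forestCost, succs,
    sum_biUnion fun x₁ _ x₂ _ hne => T.disjoint_children hne, ← sum_add_distrib]
  exact sum_congr rfl fun x _ => T.subtreeCost_eq_add_sum_children c x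

variable (r : V → ℝ) (B : ℕ)

lemma nonempty_of_mem_hyper (hB : 1 ≤ B) {v w : Finset V} (hs : T.succs v ≠ ∅)
    (hw : w ∈ T.hyper B v) : w.Nonempty := by
  have := card_pos.2 (nonempty_of_ne_empty hs)
  rw [← card_pos, (mem_powersetCard.1 hw).2]
  omega

lemma sum_hyper_sum (hB : 1 ≤ B) {v : Finset V} (hs : T.succs v ≠ ∅) (f : V → ℝ) :
    ∑ w ∈ T.hyper B v, ∑ a ∈ w, f a =
      (((T.succs v).card - 1).choose (min B (T.succs v).card - 1) : ℝ) *
        ∑ a ∈ T.succs v, f a := by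
  have := card_pos.2 (nonempty_of_ne_empty hs)
  rw [hyper, sum_sum_powersetCard _ (by omega), nsmul_eq_mul]

/-- The probability `P(w)` with which the hyperchild `w` of `v` is drawn. -/
noncomputable def hyperProb (v w : Finset V) : ℝ :=
  (∑ a ∈ w, r a) /
    ((∑ a ∈ T.succs v, r a) * ((((T.succs v).card - 1).choose (w.card - 1) : ℕ) : ℝ))

/-- The importance weight `r(S(v)) / r(w)` of the hyperchild `w` of `v`. -/
noncomputable def weight (v w : Finset V) : ℝ :=
  (∑ a ∈ T.succs v, r a) / ∑ a ∈ w, r a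

lemma hyperProb_nonneg (hr : ∀ x, 0 ≤ r x) (v w : Finset V) : 0 ≤ T.hyperProb r v w :=
  div_nonneg (sum_nonneg fun a _ => hr a)
    (mul_nonneg (sum_nonneg fun a _ => hr a) (Nat.cast_nonneg _))

lemma weight_nonneg (hr : ∀ x, 0 ≤ r x) (v w : Finset V) : 0 ≤ T.weight r v w :=
  div_nonneg (sum_nonneg fun a _ => hr a) (sum_nonneg fun a _ => hr a)

lemma sum_hyperProb (hB : 1 ≤ B) (hr : ∀ x, 0 < r x) {v : Finset V} (hs : T.succs v ≠ ∅) :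
    ∑ w ∈ T.hyper B v, T.hyperProb r v w = 1 := by
  have hrS : 0 < ∑ a ∈ T.succs v, r a := sum_pos (fun a _ => hr a) (nonempty_of_ne_empty hs)
  have hC := (Nat.choose_pos (n := (T.succs v).card - 1) (k := min B (T.succs v).card - 1)
    (by omega)).ne'
  rw [sum_congr rfl fun w hw => by rw [hyperProb, (mem_powersetCard.1 hw).2], ← sum_div,
    T.sum_hyper_sum B hB hs, mul_comm]
  exact div_self (by positivity)

/-- Every child of `v` lies in `C(|S(v)| - 1, |w| - 1)` hyperchildren of `v`, and
`P(w) · r(S(v)) / r(w)` is the reciprocal of that number. -/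
lemma sum_hyperProb_mul_weight_mul_forestCost (hB : 1 ≤ B) (hr : ∀ x, 0 < r x)
    {v : Finset V} (hs : T.succs v ≠ ∅) :
    ∑ w ∈ T.hyper B v, T.hyperProb r v w * (T.weight r v w * T.forestCost c w) =
      T.forestCost c (T.succs v) := by
  have hrS : 0 < ∑ a ∈ T.succs v, r a := sum_pos (fun a _ => hr a) (nonempty_of_ne_empty hs)
  have hC := (Nat.choose_pos (n := (T.succs v).card - 1) (k := min B (T.succs v).card - 1)
    (by omega)).ne'
  have hterm : ∀ w ∈ T.hyper B v, T.hyperProb r v w * (T.weight r v w * T.forestCost c w) =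
      T.forestCost c w / (((T.succs v).card - 1).choose (min B (T.succs v).card - 1) : ℝ) := by
    intro w hw
    have hrw : 0 < ∑ a ∈ w, r a := sum_pos (fun a _ => hr a) (T.nonempty_of_mem_hyper B hB hs hw)
    rw [hyperProb, weight, (mem_powersetCard.1 hw).2]
    field_simp
  rw [sum_congr rfl hterm, ← sum_div]
  simp only [forestCost]
  rw [T.sum_hyper_sum B hB hs, mul_div_cancel_left₀ _ (by positivity)]

lemma seiE_succ_of_succs_ne_empty {fuel : ℕ} {v : Finset V} (hs : T.succs v ≠ ∅)
    (g : ℝ → ℝ) :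
    seiE T c B r (fuel + 1) v g = ∑ w ∈ T.hyper B v, T.hyperProb r v w *
      seiE T c B r fuel w fun y =>
        g ((∑ x ∈ v, c x) / v.card + (w.card / v.card) * T.weight r v w * y) := by
  rw [seiE, if_neg hs]
  rfl

lemma seiE_add (fuel : ℕ) (v : Finset V) (g h : ℝ → ℝ) :
    seiE T c B r fuel v (fun y => g y + h y) = seiE T c B r fuel v g + seiE T c B r fuel v h := by
  induction fuel generalizing v g h with
  | zero => rfl
  | succ fuel ih =>
    by_cases hs : T.succs v = ∅
    · simp only [seiE, if_pos hs]
    · simp only [T.seiE_succ_of_succs_ne_empty c r B hs, ih, mul_add, sum_add_distrib]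

lemma seiE_const_mul (fuel : ℕ) (v : Finset V) (k : ℝ) (g : ℝ → ℝ) :
    seiE T c B r fuel v (fun y => k * g y) = k * seiE T c B r fuel v g := by
  induction fuel generalizing v g with
  | zero => rfl
  | succ fuel ih =>
    by_cases hs : T.succs v = ∅
    · simp only [seiE, if_pos hs]
    · simp only [T.seiE_succ_of_succs_ne_empty c r B hs, ih, mul_sum, mul_left_comm]

lemma seiE_const (hB : 1 ≤ B) (hr : ∀ x, 0 < r x) (fuel : ℕ) (v : Finset V) (k : ℝ) :
    seiE T c B r fuel v (fun _ => k) = k := by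
  induction fuel generalizing v with
  | zero => rfl
  | succ fuel ih =>
    by_cases hs : T.succs v = ∅
    · simp only [seiE, if_pos hs]
    · simp only [T.seiE_succ_of_succs_ne_empty c r B hs, ih, ← sum_mul,
        T.sum_hyperProb r B hB hr hs, one_mul]

lemma seiE_mul_affine (hB : 1 ≤ B) (hr : ∀ x, 0 < r x) (fuel : ℕ) (w : Finset V)
    {n : ℝ} (hn : n ≠ 0) (m a s : ℝ) :
    (seiE T c B r fuel w fun y => n * (a / n + (m / n) * s * y)) =
      a + s * seiE T c B r fuel w (fun y => m * y) := by
  have hfun : (fun y => n * (a / n + (m / n) * s * y)) = fun y => a + s * (m * y) := by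
    funext y
    field_simp
  rw [hfun, T.seiE_add, T.seiE_const c r B hB hr, T.seiE_const_mul]

lemma seiE_mul_affine_sq (hB : 1 ≤ B) (hr : ∀ x, 0 < r x) (fuel : ℕ) (w : Finset V)
    {n : ℝ} (hn : n ≠ 0) (m a s : ℝ) :
    (seiE T c B r fuel w fun y => (n * (a / n + (m / n) * s * y)) ^ 2) =
      a ^ 2 + 2 * a * s * seiE T c B r fuel w (fun y => m * y) +
        s ^ 2 * seiE T c B r fuel w (fun y => (m * y) ^ 2) := by
  have hfun : (fun y => (n * (a / n + (m / n) * s * y)) ^ 2) =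
      fun y => a ^ 2 + (2 * a * s * (m * y) + s ^ 2 * (m * y) ^ 2) := by
    funext y
    field_simp
    ring
  rw [hfun, T.seiE_add, T.seiE_add, T.seiE_const c r B hB hr,
    T.seiE_const_mul c r B _ _ (2 * a * s), T.seiE_const_mul c r B _ _ (s ^ 2), add_assoc]

lemma seqs_nonempty (fuel : ℕ) (v : Finset V) : (seqs T B fuel v).Nonempty := by
  induction fuel generalizing v with
  | zero => exact ⟨[], mem_singleton_self _⟩
  | succ fuel ih =>
    rw [seqs]
    split
    · exact ⟨[], mem_singleton_self _⟩
    · obtain ⟨w, hw⟩ : (T.hyper B v).Nonempty :=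
        powersetCard_nonempty.2 (min_le_right _ _)
      obtain ⟨l, hl⟩ := ih w
      exact ⟨w :: l, mem_biUnion.2 ⟨w, hw, mem_image_of_mem _ hl⟩⟩

noncomputable def maxAlpha (fuel : ℕ) (v : Finset V) : ℝ :=
  (seqs T B fuel v).sup' (T.seqs_nonempty B fuel v) (alphaSeq T c r v)

lemma maxAlpha_eq_one {fuel : ℕ} {v : Finset V} (h : seqs T B fuel v = {[]}) :
    T.maxAlpha c r B fuel v = 1 := by
  simp only [maxAlpha, sup'_congr _ h fun _ _ => rfl, sup'_singleton, alphaSeq]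

lemma weight_mul_maxAlpha_le {fuel : ℕ} {v w : Finset V} (hs : T.succs v ≠ ∅)
    (hw : w ∈ T.hyper B v) :
    T.weight r v w * (T.forestCost c w / T.forestCost c (T.succs v)) *
      T.maxAlpha c r B fuel w ≤ T.maxAlpha c r B (fuel + 1) v := by
  obtain ⟨l, hl, hmax⟩ := exists_mem_eq_sup' (T.seqs_nonempty B fuel w) (alphaSeq T c r w)
  rw [maxAlpha, hmax]
  refine le_sup' (alphaSeq T c r v) (b := w :: l) ?_
  rw [seqs, if_neg hs]
  exact mem_biUnion.2 ⟨w, hw, mem_image_of_mem _ hl⟩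

/-- `α` averages to `1` over a single step, hence its maximum is at least `1`. -/
lemma one_le_maxAlpha (hpos : ∀ x, 0 < T.subtreeCost c x) (hB : 1 ≤ B) (hr : ∀ x, 0 < r x)
    (fuel : ℕ) (v : Finset V) : 1 ≤ T.maxAlpha c r B fuel v := by
  induction fuel generalizing v with
  | zero => rw [T.maxAlpha_eq_one c r B rfl]
  | succ fuel ih =>
    by_cases hs : T.succs v = ∅
    · rw [T.maxAlpha_eq_one c r B (by rw [seqs, if_pos hs])]
    have hD : 0 < T.forestCost c (T.succs v) :=
      sum_pos (fun x _ => hpos x) (nonempty_of_ne_empty hs)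
    have hstep : ∀ w ∈ T.hyper B v,
        0 ≤ T.hyperProb r v w *
          (T.weight r v w * (T.forestCost c w / T.forestCost c (T.succs v))) :=
      fun w _ => mul_nonneg (T.hyperProb_nonneg r (fun x => (hr x).le) v w)
        (mul_nonneg (T.weight_nonneg r (fun x => (hr x).le) v w)
          (div_nonneg (sum_nonneg fun x _ => (hpos x).le) hD.le))
    calc (1 : ℝ)
        = ∑ w ∈ T.hyper B v,
            T.hyperProb r v w *
              (T.weight r v w * (T.forestCost c w / T.forestCost c (T.succs v))) := by
          simp_rw [← mul_div_assoc, ← sum_div,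
            T.sum_hyperProb_mul_weight_mul_forestCost c r B hB hr hs, div_self hD.ne']
      _ ≤ ∑ w ∈ T.hyper B v, T.hyperProb r v w *
            (T.weight r v w * (T.forestCost c w / T.forestCost c (T.succs v)) *
              T.maxAlpha c r B fuel w) := by
          refine sum_le_sum fun w hw => ?_
          simpa only [mul_assoc] using le_mul_of_one_le_right (hstep w hw) (ih w)
      _ ≤ ∑ w ∈ T.hyper B v, T.hyperProb r v w * T.maxAlpha c r B (fuel + 1) v :=
          sum_le_sum fun w hw => mul_le_mul_of_nonneg_left (T.weight_mul_maxAlpha_le c r B hs hw)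
            (T.hyperProb_nonneg r (fun x => (hr x).le) v w)
      _ = T.maxAlpha c r B (fuel + 1) v := by rw [← sum_mul, T.sum_hyperProb r B hB hr hs, one_mul]

lemma card_le_fuel_add_depth_of_mem_hyper {fuel : ℕ} {v w : Finset V}
    (hf : ∀ x ∈ v, Fintype.card V ≤ fuel + 1 + T.depth x) (hw : w ∈ T.hyper B v) :
    ∀ x ∈ w, Fintype.card V ≤ fuel + T.depth x := by
  intro x hx
  obtain ⟨p, hp, hxp⟩ := mem_biUnion.1 ((mem_powersetCard.1 hw).1 hx)
  have := hf p hp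
  have := T.depth_of_mem_children hxp
  omega

-- `seiE` stops after `fuel` levels; as every depth is below `Fintype.card V`, the fuel
-- hypothesis makes it reach the leaves.
lemma seiE_card_mul_eq_forestCost (hB : 1 ≤ B) (hr : ∀ x, 0 < r x) (fuel : ℕ)
    (v : Finset V) (hv : v.Nonempty) (hf : ∀ x ∈ v, Fintype.card V ≤ fuel + T.depth x) :
    seiE T c B r fuel v (fun y => v.card * y) = T.forestCost c v := by
  induction fuel generalizing v with
  | zero =>
    obtain ⟨x, hx⟩ := hv
    have := hf x hx
    have := T.depth_lt_card x
    omega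
  | succ fuel ih =>
    have hv0 : (v.card : ℝ) ≠ 0 := Nat.cast_ne_zero.2 (card_pos.2 hv).ne'
    rw [T.forestCost_eq_add_forestCost_succs c v]
    by_cases hs : T.succs v = ∅
    · rw [seiE, if_pos hs, hs, forestCost, sum_empty, add_zero, mul_div_cancel₀ _ hv0]
    rw [T.seiE_succ_of_succs_ne_empty c r B hs, sum_congr rfl fun w hw => by
      rw [T.seiE_mul_affine c r B hB hr fuel w hv0,
        ih w (T.nonempty_of_mem_hyper B hB hs hw) (T.card_le_fuel_add_depth_of_mem_hyper B hf hw)]]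
    simp only [mul_add, sum_add_distrib, ← sum_mul, T.sum_hyperProb r B hB hr hs, one_mul,
      T.sum_hyperProb_mul_weight_mul_forestCost c r B hB hr hs]

-- Bound `E` by `M(w) Cost(T_w)²`, then absorb one factor `α(v, w, …) ≤ M(v)`.
lemma hyperProb_mul_second_moment_le (hpos : ∀ x, 0 < T.subtreeCost c x) (hr : ∀ x, 0 < r x)
    {fuel : ℕ} {v w : Finset V} (hs : T.succs v ≠ ∅) (hw : w ∈ T.hyper B v) (a : ℝ) {E : ℝ}
    (hE : E ≤ T.maxAlpha c r B fuel w * T.forestCost c w ^ 2) :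
    T.hyperProb r v w * (a ^ 2 + 2 * a * T.weight r v w * T.forestCost c w +
        T.weight r v w ^ 2 * E) ≤
      T.hyperProb r v w * a ^ 2 +
        2 * a * (T.hyperProb r v w * (T.weight r v w * T.forestCost c w)) +
        T.hyperProb r v w * (T.weight r v w * T.forestCost c w) * T.forestCost c (T.succs v) *
          T.maxAlpha c r B (fuel + 1) v := by
  have hP := T.hyperProb_nonneg r (fun x => (hr x).le) v w
  have hW := T.weight_nonneg r (fun x => (hr x).le) v w
  have hCw : 0 ≤ T.forestCost c w := sum_nonneg fun x _ => (hpos x).le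
  have hD : 0 < T.forestCost c (T.succs v) :=
    sum_pos (fun x _ => hpos x) (nonempty_of_ne_empty hs)
  calc _ ≤ T.hyperProb r v w * (a ^ 2 + 2 * a * T.weight r v w * T.forestCost c w +
        T.weight r v w ^ 2 * (T.maxAlpha c r B fuel w * T.forestCost c w ^ 2)) := by
        gcongr
    _ = T.hyperProb r v w * a ^ 2 +
        2 * a * (T.hyperProb r v w * (T.weight r v w * T.forestCost c w)) +
        T.hyperProb r v w * (T.weight r v w * T.forestCost c w) * T.forestCost c (T.succs v) *
          (T.weight r v w * (T.forestCost c w / T.forestCost c (T.succs v)) *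
            T.maxAlpha c r B fuel w) := by
        field_simp
    _ ≤ _ := by
        gcongr
        exact T.weight_mul_maxAlpha_le c r B hs hw

lemma seiE_sq_le_maxAlpha_mul_sq (hc : ∀ x, 0 ≤ c x) (hpos : ∀ x, 0 < T.subtreeCost c x)
    (hB : 1 ≤ B) (hr : ∀ x, 0 < r x) (fuel : ℕ) (v : Finset V) (hv : v.Nonempty)
    (hf : ∀ x ∈ v, Fintype.card V ≤ fuel + T.depth x) :
    seiE T c B r fuel v (fun y => (v.card * y) ^ 2) ≤
      T.maxAlpha c r B fuel v * T.forestCost c v ^ 2 := by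
  induction fuel generalizing v with
  | zero =>
    obtain ⟨x, hx⟩ := hv
    have := hf x hx
    have := T.depth_lt_card x
    omega
  | succ fuel ih =>
    have hv0 : (v.card : ℝ) ≠ 0 := Nat.cast_ne_zero.2 (card_pos.2 hv).ne'
    rw [T.forestCost_eq_add_forestCost_succs c v]
    by_cases hs : T.succs v = ∅
    · rw [seiE, if_pos hs, T.maxAlpha_eq_one c r B (by rw [seqs, if_pos hs]), hs, forestCost,
        sum_empty, add_zero, mul_div_cancel₀ _ hv0, one_mul]
    set a := ∑ x ∈ v, c x
    set D := T.forestCost c (T.succs v)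
    set M := T.maxAlpha c r B (fuel + 1) v
    have hD : 0 < D := sum_pos (fun x _ => hpos x) (nonempty_of_ne_empty hs)
    calc seiE T c B r (fuel + 1) v (fun y => (v.card * y) ^ 2)
        ≤ ∑ w ∈ T.hyper B v, (T.hyperProb r v w * a ^ 2 +
            2 * a * (T.hyperProb r v w * (T.weight r v w * T.forestCost c w)) +
            T.hyperProb r v w * (T.weight r v w * T.forestCost c w) * D * M) := by
          rw [T.seiE_succ_of_succs_ne_empty c r B hs]
          refine sum_le_sum fun w hw => ?_
          have hw' := T.nonempty_of_mem_hyper B hB hs hw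
          have hf' := T.card_le_fuel_add_depth_of_mem_hyper B hf hw
          rw [T.seiE_mul_affine_sq c r B hB hr fuel w hv0,
            T.seiE_card_mul_eq_forestCost c r B hB hr fuel w hw' hf']
          exact T.hyperProb_mul_second_moment_le c r B hpos hr hs hw a (ih w hw' hf')
      _ = a ^ 2 + 2 * a * D + D * D * M := by
          simp only [sum_add_distrib, ← sum_mul, ← mul_sum, T.sum_hyperProb r B hB hr hs,
            T.sum_hyperProb_mul_weight_mul_forestCost c r B hB hr hs, one_mul]
          rfl
      _ ≤ M * (a + D) ^ 2 := by
          have hM := T.one_le_maxAlpha c r B hpos hB hr (fuel + 1) v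
          have ha : 0 ≤ a := sum_nonneg fun x _ => hc x
          nlinarith [mul_nonneg (mul_nonneg ha (add_nonneg ha (mul_nonneg two_pos.le hD.le)))
            (sub_nonneg.2 hM)]

/-- Paper's Theorem 7: `CV²(|v|·C_SEI(T_v)) ≤ max_{(x_1,…,x_n) ∈ 𝒳(v)}
α(v, x_1, …, x_n) − 1`, where `𝒳(v)` is the collection of all hypernode
sequences that can occur after `x_0 = v`. -/
theorem sei_cv2_le_max_alpha (T : FinRootedTree V) (c : V → ℝ)
    (hc : ∀ x, 0 ≤ c x) (hpos : ∀ x : V, 0 < T.subtreeCost c x)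
    (B : ℕ) (hB : 1 ≤ B) (r : V → ℝ) (hr : ∀ x : V, 0 < r x)
    (v : Finset V) (hv : T.IsHypernode v)
    (hne : (seqs T B (Fintype.card V) v).Nonempty) :
    seiCV2 T c B r (Fintype.card V) v ≤
      (seqs T B (Fintype.card V) v).sup' hne (fun l => alphaSeq T c r v l) - 1 := by
  have hfuel : ∀ x ∈ v, Fintype.card V ≤ Fintype.card V + T.depth x :=
    fun x _ => Nat.le_add_right _ _
  have hmean := T.seiE_card_mul_eq_forestCost c r B hB hr _ v hv.1 hfuel
  have hsq := T.seiE_sq_le_maxAlpha_mul_sq c r B hc hpos hB hr _ v hv.1 hfuel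
  have hcost : 0 < T.forestCost c v := sum_pos (fun x _ => hpos x) hv.1
  change _ ≤ T.maxAlpha c r B (Fintype.card V) v - 1
  rw [seiCV2, seiVar, hmean, div_le_iff₀ (by positivity)]
  linarith

end FinRootedTree
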